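/- The map g_+ sending each β_j to a single symbol β (and fixing all α_j) restricts to a bijection from B^{+∞}_{−∞} = {x ∈ X : liminf_{i→+∞} H_i(x) = +∞, liminf_{i→−∞} H_i(x) = −∞} onto the corresponding subset Ω^{+∞}_{−∞} of the full shift {α_1,…,α_m, β}^ℤ, and (x, y) are homoclinic (differ in finitely many coordinates) in X iff (g_+(x), g_+(y)) are homoclinic in Ω. -/
import Mathlib



/-- Symbols of the `m`-Dyck alphabet: `a j` is the opening bracket `α_j`,
`b j` is the closing bracket `β_j`. -/
inductive DSym (m : ℕ) : Type
  | a : Fin m → DSym m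
  | b : Fin m → DSym m
  deriving DecidableEq

namespace Dyck

/-- One step of the stack evaluation computing the reduced form (canonical
representative in the syntactic monoid).  `none` is the zero of the monoid;
`some (bs, as)` is the reduced word `β_{bs} α_{as}` (unmatched closing
brackets, then a stack of unmatched opening brackets). -/
def step {m : ℕ} : Option (List (Fin m) × List (Fin m)) → DSym m →
    Option (List (Fin m) × List (Fin m))
  | none, _ => none
  | some (bs, as), .a j => some (bs, j :: as)
  | some (bs, []), .b j => some (bs ++ [j], [])
  | some (bs, i :: as), .b j => if i = j then some (bs, as) else none

/-- The image of a word in the syntactic monoid `M` (in reduced form). -/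
def eval {m : ℕ} (w : List (DSym m)) : Option (List (Fin m) × List (Fin m)) :=
  w.foldl step (some ([], []))

/-- A word is admissible (belongs to the Dyck language) iff it is nonzero mod `M`. -/
def Admissible {m : ℕ} (w : List (DSym m)) : Prop := eval w ≠ none

/-- A word is balanced iff it is `≡ 1` mod `M`. -/
def Balanced {m : ℕ} (w : List (DSym m)) : Prop := eval w = some ([], [])

end Dyck

namespace Dyck

/-- The sign of a symbol: `+1` for opening brackets, `-1` for closing brackets. -/
def sgn {m : ℕ} : DSym m → ℤ
  | .a _ => 1
  | .b _ => -1

/-- The height function `H_i(x)` of a bi-infinite sequence: for `i > 0` the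
number of `α`'s minus the number of `β`'s among `x_0, …, x_{i-1}`; `H_0 = 0`;
for `i < 0` the number of `β`'s minus the number of `α`'s among `x_i, …, x_{-1}`. -/
def Hfun {m : ℕ} (x : ℤ → DSym m) (i : ℤ) : ℤ :=
  if 0 ≤ i then ∑ j ∈ Finset.range i.toNat, sgn (x j)
  else - ∑ j ∈ Finset.range (-i).toNat, sgn (x (i + j))

/-- Membership in the two-sided `m`-Dyck shift: every finite subword is
admissible (nonzero in the syntactic monoid). -/
def InX {m : ℕ} (x : ℤ → DSym m) : Prop :=
  ∀ (i : ℤ) (n : ℕ), Admissible (List.ofFn fun t : Fin n => x (i + t))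

end Dyck

namespace Dyck

/-- Symbols of `Ω = {α_1,…,α_m,β}`: `some j` is `α_j`, `none` is `β`. -/
abbrev OSym (m : ℕ) := Option (Fin m)

/-- The map `g₊`: keeps every `α_j` and collapses all `β_j` to `β`. -/
def gPlus {m : ℕ} (x : ℤ → DSym m) : ℤ → OSym m := fun i =>
  match x i with
  | .a j => some j
  | .b _ => none

/-- Sign on `Ω`: `+1` for `α`'s, `-1` for `β`. -/
def sgnO {m : ℕ} : OSym m → ℤ
  | some _ => 1
  | none => -1

/-- The height function `Ĥ_i` on `Ω`. -/
def HfunO {m : ℕ} (ω : ℤ → OSym m) (i : ℤ) : ℤ :=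
  if 0 ≤ i then ∑ j ∈ Finset.range i.toNat, sgnO (ω j)
  else - ∑ j ∈ Finset.range (-i).toNat, sgnO (ω (i + j))

open Filter in
/-- `B^{+∞}_{−∞}`: points of the Dyck shift with `liminf_{i→+∞} H_i = +∞` and
`liminf_{i→−∞} H_i = −∞`. -/
def BPlusMinus (m : ℕ) : Set (ℤ → DSym m) :=
  {x | InX x ∧ Tendsto (Hfun x) atTop atTop ∧
    ∀ c : ℤ, ∃ᶠ i in atBot, Hfun x i ≤ c}

open Filter in
/-- `Ω^{+∞}_{−∞}`: points of the full shift `Ω` with `liminf_{i→+∞} Ĥ_i = +∞`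
and `liminf_{i→−∞} Ĥ_i = −∞`. -/
def OmegaPlusMinus (m : ℕ) : Set (ℤ → OSym m) :=
  {ω | Tendsto (HfunO ω) atTop atTop ∧ ∀ c : ℤ, ∃ᶠ i in atBot, HfunO ω i ≤ c}

end Dyck
namespace Dyck

open Filter

variable {m : ℕ}

lemma HfunO_zero (ω : ℤ → OSym m) : HfunO ω 0 = 0 := by simp [HfunO]

lemma HfunO_succ (ω : ℤ → OSym m) (i : ℤ) :
    HfunO ω (i + 1) = HfunO ω i + sgnO (ω i) := by
  rcases le_or_gt 0 i with h | h
  · have h1 : (0:ℤ) ≤ i + 1 := by omega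
    have ht : (i + 1).toNat = i.toNat + 1 := by omega
    have hc : (i.toNat : ℤ) = i := by omega
    rw [HfunO, HfunO, if_pos h1, if_pos h, ht, Finset.sum_range_succ, hc]
  · rcases eq_or_lt_of_le (by omega : i + 1 ≤ 0) with h0 | h0
    · have hi : i = -1 := by omega
      subst hi
      simp [HfunO]
    · have h2 : ¬ (0:ℤ) ≤ i + 1 := by omega
      have h3 : ¬ (0:ℤ) ≤ i := by omega
      rw [HfunO, HfunO, if_neg h2, if_neg h3]
      have ht : (-i).toNat = (-(i+1)).toNat + 1 := by omega
      have hs : ∑ j ∈ Finset.range ((-(i+1)).toNat), sgnO (ω (i + 1 + j))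
          = ∑ j ∈ Finset.range ((-(i+1)).toNat), sgnO (ω (i + ((j + 1 : ℕ) : ℤ))) := by
        apply Finset.sum_congr rfl; intro j _; congr 1; push_cast; ring
      rw [hs, ht, Finset.sum_range_succ']
      simp only [Nat.cast_zero, add_zero]
      ring
lemma sgnO_gPlus (x : ℤ → DSym m) (i : ℤ) : sgnO (gPlus x i) = sgn (x i) := by
  unfold gPlus
  cases x i <;> rfl

lemma HfunO_gPlus (x : ℤ → DSym m) : HfunO (gPlus x) = Hfun x := by
  funext i
  unfold HfunO Hfun
  split <;> simp [sgnO_gPlus]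

lemma sgnO_cases (u : OSym m) : sgnO u = 1 ∨ sgnO u = -1 := by
  cases u <;> simp [sgnO]

lemma ivt_aux (ω : ℤ → OSym m) (v i : ℤ) (hi : HfunO ω i ≤ v) :
    ∀ n : ℕ, v ≤ HfunO ω (i + n) → ∃ q, i ≤ q ∧ q ≤ i + n ∧ HfunO ω q = v := by
  intro n
  induction n with
  | zero =>
    intro hv
    rw [show i + ((0:ℕ):ℤ) = i by simp] at hv
    exact ⟨i, le_refl i, by simp, by omega⟩
  | succ k ih =>
    intro hv
    have hstep := HfunO_succ ω (i + k)
    have hcast : i + ((k : ℤ) + 1) = (i + k) + 1 := by ring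
    rw [show ((k+1 : ℕ) : ℤ) = (k : ℤ) + 1 by push_cast; ring, hcast] at hv
    rcases sgnO_cases (ω (i + k)) with hs | hs
    · rcases le_or_gt v (HfunO ω (i + k)) with h' | h'
      · obtain ⟨q, h1, h2, h3⟩ := ih h'
        exact ⟨q, h1, by push_cast; omega, h3⟩
      · exact ⟨i + k + 1, by omega, by push_cast; omega, by omega⟩
    · obtain ⟨q, h1, h2, h3⟩ := ih (by omega)
      exact ⟨q, h1, by push_cast; omega, h3⟩

/-- Discrete IVT for the height function. -/
lemma ivt (ω : ℤ → OSym m) (v i p : ℤ) (hip : i ≤ p) (hi : HfunO ω i ≤ v)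
    (hp : v ≤ HfunO ω p) : ∃ q, i ≤ q ∧ q ≤ p ∧ HfunO ω q = v := by
  have h : i + ((p - i).toNat : ℤ) = p := by omega
  obtain ⟨q, h1, h2, h3⟩ := ivt_aux ω v i hi (p - i).toNat (by rw [h]; exact hp)
  exact ⟨q, h1, by omega, h3⟩
open Classical in
/-- The position of the opening bracket matching position `p`:
the greatest `q ≤ p` with `Ĥ_q = Ĥ_p - 1`. -/
noncomputable def matchPos (ω : ℤ → OSym m) (p : ℤ) : ℤ :=
  if h : ∃ q, (q ≤ p ∧ HfunO ω q = HfunO ω p - 1) ∧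
      ∀ r, (r ≤ p ∧ HfunO ω r = HfunO ω p - 1) → r ≤ q
  then h.choose else p

lemma matchPos_spec (ω : ℤ → OSym m)
    (hb : ∀ c : ℤ, ∃ᶠ i in Filter.atBot, HfunO ω i ≤ c) (p : ℤ) :
    matchPos ω p < p ∧ HfunO ω (matchPos ω p) = HfunO ω p - 1 ∧
      (∀ t, matchPos ω p < t → t ≤ p → HfunO ω p - 1 < HfunO ω t) ∧
      ∃ c, ω (matchPos ω p) = some c := by
  obtain ⟨i, hip, hiv⟩ := Filter.frequently_atBot.mp (hb (HfunO ω p - 1)) p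
  have hex : ∃ q, q ≤ p ∧ HfunO ω q = HfunO ω p - 1 := by
    obtain ⟨q, h1, h2, h3⟩ := ivt ω (HfunO ω p - 1) i p hip hiv (by omega)
    exact ⟨q, h2, h3⟩
  obtain ⟨q, hq, hgr⟩ := Int.exists_greatest_of_bdd
    ⟨p, fun z hz => hz.1⟩ hex
  have hm : matchPos ω p = q := by
    rw [matchPos, dif_pos ⟨q, hq, hgr⟩]
    generalize_proofs h
    obtain ⟨hq', hgr'⟩ := h.choose_spec
    exact le_antisymm (hgr _ hq') (hgr' _ hq)
  rw [hm]
  have hqp : q < p := by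
    have h2 := hq.2
    rcases eq_or_lt_of_le hq.1 with h | h
    · rw [h] at h2; omega
    · exact h
  have key : ∀ t, q < t → t ≤ p → HfunO ω p - 1 < HfunO ω t := by
    intro t h1 h2
    by_contra hle
    push_neg at hle
    obtain ⟨r, hr1, hr2, hr3⟩ := ivt ω (HfunO ω p - 1) t p h2 hle (by omega)
    have := hgr r ⟨hr2, hr3⟩
    omega
  refine ⟨hqp, hq.2, key, ?_⟩
  have h1 : HfunO ω (q + 1) = HfunO ω q + sgnO (ω q) := HfunO_succ ω q
  have h2 : HfunO ω p - 1 < HfunO ω (q + 1) := key (q+1) (by omega) (by omega)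
  cases hc : ω q with
  | none => rw [hc] at h1; simp [sgnO] at h1; omega
  | some c => exact ⟨c, rfl⟩

lemma matchPos_eq (ω : ℤ → OSym m)
    (hb : ∀ c : ℤ, ∃ᶠ i in Filter.atBot, HfunO ω i ≤ c) (p q : ℤ)
    (h1 : q ≤ p) (h2 : HfunO ω q = HfunO ω p - 1)
    (h3 : ∀ t, q < t → t ≤ p → HfunO ω t ≠ HfunO ω p - 1) :
    matchPos ω p = q := by
  obtain ⟨hlt, hv, hgt, _⟩ := matchPos_spec ω hb p
  rcases lt_trichotomy (matchPos ω p) q with h | h | h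
  · have := hgt q h h1; omega
  · exact h
  · exact absurd hv (h3 _ h (le_of_lt hlt))

/-- The inverse of `g₊`: each `β` gets the type of its matching `α`. -/
noncomputable def gInv [NeZero m] (ω : ℤ → OSym m) (p : ℤ) : DSym m :=
  (ω p).elim (.b ((ω (matchPos ω p)).getD 0)) .a

lemma gInv_a [NeZero m] (ω : ℤ → OSym m) {p : ℤ} {j : Fin m} (h : ω p = some j) :
    gInv ω p = .a j := by rw [gInv, h]; rfl

lemma gInv_b [NeZero m] (ω : ℤ → OSym m) {p : ℤ} (h : ω p = none) :
    gInv ω p = .b ((ω (matchPos ω p)).getD 0) := by rw [gInv, h]; rfl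

lemma gPlus_gInv [NeZero m] (ω : ℤ → OSym m) : gPlus (gInv ω) = ω := by
  funext p
  cases h : ω p with
  | none => rw [gPlus, gInv_b ω h]
  | some j => rw [gPlus, gInv_a ω h]
/-- The type (index) of a symbol. -/
def tpD : DSym m → Fin m
  | .a j => j
  | .b j => j

/-- Invariant: `L` is the stack of positions of unmatched opening brackets
in the window `[i, i+n)`, top first. -/
def Inv (A : ℤ → Prop) (S : ℤ → ℤ) (i : ℤ) (n : ℕ) (L : List ℤ) : Prop :=
  ∀ (j : ℕ) (hj : j < L.length), i ≤ L.get ⟨j, hj⟩ ∧ L.get ⟨j, hj⟩ < i + n ∧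
    A (L.get ⟨j, hj⟩) ∧ S (L.get ⟨j, hj⟩) = S (i + n) - 1 - (j : ℤ) ∧
    ∀ t, L.get ⟨j, hj⟩ < t → t ≤ i + n → S (L.get ⟨j, hj⟩) < S t

lemma inv_nil (A : ℤ → Prop) (S : ℤ → ℤ) (i : ℤ) : Inv A S i 0 [] := by
  intro j hj; exact absurd hj (by simp)

lemma inv_push {A : ℤ → Prop} {S : ℤ → ℤ} {i : ℤ} {n : ℕ} {L : List ℤ}
    (h : Inv A S i n L) (hA : A (i + n)) (hS : S (i + n + 1) = S (i + n) + 1) :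
    Inv A S i (n + 1) ((i + n) :: L) := by
  have hc : (((n : ℕ) + 1 : ℕ) : ℤ) = (n : ℤ) + 1 := by push_cast; ring
  intro j hj
  rw [hc, show i + ((n:ℤ)+1) = i + (n:ℤ) + 1 from by ring]
  cases j with
  | zero =>
    have e : ((i + (n:ℤ)) :: L).get ⟨0, hj⟩ = i + n := rfl
    rw [e]
    refine ⟨by omega, by omega, hA, by push_cast; omega, ?_⟩
    intro t h1 h2
    have ht : t = i + n + 1 := by omega
    rw [ht]; omega
  | succ jj =>
    have hj' : jj < L.length := by simpa using hj
    have e : ((i + (n:ℤ)) :: L).get ⟨jj + 1, hj⟩ = L.get ⟨jj, hj'⟩ := rfl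
    rw [e]
    obtain ⟨k1, k2, k3, k4, k5⟩ := h jj hj'
    refine ⟨k1, by omega, k3, by push_cast; push_cast at k4; omega, ?_⟩
    intro t h1 h2
    rcases eq_or_lt_of_le h2 with h' | h'
    · rw [h']; omega
    · exact k5 t h1 (by omega)

lemma inv_pop {A : ℤ → Prop} {S : ℤ → ℤ} {i : ℤ} {n : ℕ} {L : List ℤ}
    (h : Inv A S i n L) (hS : S (i + n + 1) = S (i + n) - 1) :
    Inv A S i (n + 1) L.tail := by
  have hc : (((n : ℕ) + 1 : ℕ) : ℤ) = (n : ℤ) + 1 := by push_cast; ring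
  cases L with
  | nil => intro j hj; exact absurd hj (by simp)
  | cons q rest =>
    intro j hj
    rw [hc, show i + ((n:ℤ)+1) = i + (n:ℤ) + 1 from by ring]
    have hj0 : j < rest.length := by simpa using hj
    have hj' : j + 1 < (q :: rest).length := by simpa using Nat.succ_lt_succ hj0
    have e : (q :: rest).tail.get ⟨j, hj⟩ = (q :: rest).get ⟨j + 1, hj'⟩ := rfl
    rw [e]
    obtain ⟨k1, k2, k3, k4, k5⟩ := h (j + 1) hj'
    refine ⟨k1, by omega, k3, by push_cast; push_cast at k4; omega, ?_⟩
    intro t h1 h2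
    rcases eq_or_lt_of_le h2 with h' | h'
    · rw [h']; omega
    · exact k5 t h1 (by omega)

lemma window_succ (x : ℤ → DSym m) (i : ℤ) (n : ℕ) :
    (List.ofFn fun t : Fin (n+1) => x (i + t)) =
      (List.ofFn fun t : Fin n => x (i + t)) ++ [x (i + n)] := by
  rw [List.ofFn_succ']
  simp [List.concat_eq_append]

lemma eval_append (w : List (DSym m)) (s : DSym m) :
    eval (w ++ [s]) = step (eval w) s := by
  rw [eval, eval, List.foldl_append]
  rfl
lemma Hfun_succ (x : ℤ → DSym m) (i : ℤ) :
    Hfun x (i + 1) = Hfun x i + sgn (x i) := by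
  rw [← HfunO_gPlus x, ← sgnO_gPlus]
  exact HfunO_succ _ _

/-- Structure of the evaluation of a window of an admissible point. -/
lemma eval_struct (x : ℤ → DSym m) (hx : InX x) (i : ℤ) :
    ∀ n : ℕ, ∃ bs L, Inv (fun q => ∃ c, x q = .a c) (Hfun x) i n L ∧
      eval (List.ofFn fun t : Fin n => x (i + t)) =
        some (bs, L.map fun q => tpD (x q)) ∧
      Hfun x (i + n) = Hfun x i - bs.length + L.length := by
  intro n
  induction n with
  | zero => exact ⟨[], [], inv_nil _ _ _, by simp [eval], by simp⟩
  | succ k ih =>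
    obtain ⟨bs, L, hInv, hev, hct⟩ := ih
    have hstep := Hfun_succ x (i + k)
    have hcast : i + ((k + 1 : ℕ) : ℤ) = i + (k : ℤ) + 1 := by push_cast; ring
    have hev' : eval (List.ofFn fun t : Fin (k+1) => x (i + t)) =
        step (some (bs, L.map fun q => tpD (x q))) (x (i + k)) := by
      rw [window_succ, eval_append, hev]
    cases hxc : x (i + (k : ℤ)) with
    | a c =>
      rw [hxc] at hev' hstep
      simp only [sgn] at hstep
      refine ⟨bs, (i + k) :: L, inv_push hInv ⟨c, hxc⟩ hstep, ?_, ?_⟩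
      · rw [hev']
        simp [step, hxc, tpD]
      · rw [hcast, hstep, hct]
        simp only [List.length_cons]
        push_cast
        ring
    | b c =>
      rw [hxc] at hev' hstep
      simp only [sgn] at hstep
      have hsg : Hfun x (i + k + 1) = Hfun x (i + k) - 1 := by omega
      cases hL : L with
      | nil =>
        rw [hL] at hInv hev' hct
        refine ⟨bs ++ [c], [], inv_pop hInv hsg, ?_, ?_⟩
        · rw [hev']
          simp [step]
        · rw [hcast, hsg, hct]
          simp
          push_cast
          ring
      | cons q rest =>
        rw [hL] at hInv hev' hct
        have hpop : tpD (x q) = c := by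
          by_contra hne
          have hnone : eval (List.ofFn fun t : Fin (k+1) => x (i + t)) = none := by
            rw [hev']
            simp [step, if_neg hne]
          exact hx i (k+1) hnone
        refine ⟨bs, rest, ?_, ?_, ?_⟩
        · have := inv_pop hInv hsg
          simpa using this
        · rw [hev']
          simp [step, hpop]
        · rw [hcast, hsg, hct]
          simp only [List.length_cons]
          push_cast
          ring
/-- The point constructed by `gInv` has all windows admissible, with the same
stack structure. -/
lemma eval_gInv [NeZero m] (ω : ℤ → OSym m)
    (hb : ∀ c : ℤ, ∃ᶠ i in Filter.atBot, HfunO ω i ≤ c) (i : ℤ) :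
    ∀ n : ℕ, ∃ bs L, Inv (fun q => ∃ c, ω q = some c) (HfunO ω) i n L ∧
      eval (List.ofFn fun t : Fin n => gInv ω (i + t)) =
        some (bs, L.map fun q => tpD (gInv ω q)) := by
  intro n
  induction n with
  | zero => exact ⟨[], [], inv_nil _ _ _, by simp [eval]⟩
  | succ k ih =>
    obtain ⟨bs, L, hInv, hev⟩ := ih
    have hstep := HfunO_succ ω (i + k)
    have hev' : eval (List.ofFn fun t : Fin (k+1) => gInv ω (i + t)) =
        step (some (bs, L.map fun q => tpD (gInv ω q))) (gInv ω (i + k)) := by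
      rw [window_succ, eval_append, hev]
    cases hoc : ω (i + (k : ℤ)) with
    | some c =>
      rw [hoc] at hstep
      simp only [sgnO] at hstep
      have hxa : gInv ω (i + (k : ℤ)) = .a c := gInv_a ω hoc
      rw [hxa] at hev'
      refine ⟨bs, (i + k) :: L, inv_push hInv ⟨c, hoc⟩ hstep, ?_⟩
      rw [hev']
      simp [step, hxa, tpD]
    | none =>
      rw [hoc] at hstep
      simp only [sgnO] at hstep
      have hsg : HfunO ω (i + k + 1) = HfunO ω (i + k) - 1 := by omega
      have hxb : gInv ω (i + (k : ℤ)) = .b ((ω (matchPos ω (i + k))).getD 0) :=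
        gInv_b ω hoc
      rw [hxb] at hev'
      cases hL : L with
      | nil =>
        rw [hL] at hInv hev'
        refine ⟨bs ++ [(ω (matchPos ω (i + k))).getD 0], [], inv_pop hInv hsg, ?_⟩
        rw [hev']
        simp [step]
      | cons q rest =>
        rw [hL] at hInv hev'
        obtain ⟨k1, k2, k3, k4, k5⟩ := hInv 0 (Nat.succ_pos _)
        have k2' : q < i + (k : ℤ) := k2
        have k4' : HfunO ω q = HfunO ω (i + (k : ℤ)) - 1 - ((0:ℕ) : ℤ) := k4
        have k5' : ∀ t, q < t → t ≤ i + (k : ℤ) → HfunO ω q < HfunO ω t := k5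
        obtain ⟨c', hc'⟩ := k3
        have hc2 : ω q = some c' := hc'
        have hmq : matchPos ω (i + k) = q := by
          apply matchPos_eq ω hb _ _ (le_of_lt k2')
          · omega
          · intro t h1 h2 hEq
            have := k5' t h1 h2
            omega
        refine ⟨bs, rest, ?_, ?_⟩
        · have := inv_pop hInv hsg
          simpa using this
        · rw [hev', hmq, hc2]
          have hq : tpD (gInv ω q) = c' := by rw [gInv_a ω hc2, tpD]
          simp [step, hq]
lemma InX_gInv [NeZero m] (ω : ℤ → OSym m)
    (hb : ∀ c : ℤ, ∃ᶠ i in Filter.atBot, HfunO ω i ≤ c) : InX (gInv ω) := by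
  intro i n
  obtain ⟨bs, L, _, hev⟩ := eval_gInv ω hb i n
  rw [Admissible, hev]
  simp

lemma gPlus_eq_some {x : ℤ → DSym m} {p : ℤ} {j : Fin m} (h : x p = .a j) :
    gPlus x p = some j := by unfold gPlus; rw [h]

lemma gPlus_eq_none {x : ℤ → DSym m} {p : ℤ} {j : Fin m} (h : x p = .b j) :
    gPlus x p = none := by unfold gPlus; rw [h]

/-- Key recovery lemma: `gInv` inverts `gPlus` on admissible points with
heights unbounded below on the left. -/
lemma gInv_gPlus [NeZero m] (x : ℤ → DSym m) (hx : InX x)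
    (hb : ∀ c : ℤ, ∃ᶠ i in Filter.atBot, Hfun x i ≤ c) :
    gInv (gPlus x) = x := by
  funext p
  have hS : HfunO (gPlus x) = Hfun x := HfunO_gPlus x
  have hbo : ∀ c : ℤ, ∃ᶠ i in Filter.atBot, HfunO (gPlus x) i ≤ c := by
    rw [hS]; exact hb
  cases hxp : x p with
  | a j => rw [gInv_a (gPlus x) (gPlus_eq_some hxp)]
  | b j =>
    have hop : gPlus x p = none := gPlus_eq_none hxp
    rw [gInv_b (gPlus x) hop]
    obtain ⟨hlt, hv, hgt, c, hc⟩ := matchPos_spec (gPlus x) hbo p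
    set q := matchPos (gPlus x) p with hq
    rw [hS] at hv hgt
    have hxq : x q = .a c := by
      cases hxq' : x q with
      | a c2 => rw [gPlus_eq_some hxq'] at hc; injection hc with h; rw [h]
      | b c2 => rw [gPlus_eq_none hxq'] at hc; exact absurd hc (by simp)
    set n := (p - q).toNat with hnn
    have hn : q + ((n : ℕ) : ℤ) = p := by omega
    obtain ⟨bs, L, hInv, hev, hct⟩ := eval_struct x hx q n
    rw [hn] at hct
    have hlen : 0 < L.length := by omega
    cases hL : L with
    | nil => rw [hL] at hlen; simp at hlen
    | cons q1 rest =>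
      rw [hL] at hInv hev
      obtain ⟨k1, _, _, k4, _⟩ := hInv 0 (Nat.succ_pos _)
      have k1' : q ≤ q1 := k1
      have k2' : q1 < q + (n : ℤ) := hInv 0 (Nat.succ_pos _) |>.2.1
      have k4' : Hfun x q1 = Hfun x (q + (n : ℤ)) - 1 - ((0:ℕ) : ℤ) := k4
      rw [hn] at k2' k4'
      have hq1 : q1 = q := by
        rcases eq_or_lt_of_le k1' with h | h
        · omega
        · have := hgt q1 h (le_of_lt k2')
          omega
      have hev1 : eval (List.ofFn fun t : Fin (n+1) => x (q + t)) =
          step (some (bs, List.map (fun r => tpD (x r)) (q1 :: rest))) (x (q + (n:ℤ))) := by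
        rw [window_succ, eval_append, hev]
      rw [hn, hxp, hq1] at hev1
      have htp : List.map (fun r => tpD (x r)) (q :: rest) =
          c :: List.map (fun r => tpD (x r)) rest := by
        rw [List.map_cons, hxq]; rfl
      have hcj : c = j := by
        by_contra hne
        have hnone : eval (List.ofFn fun t : Fin (n+1) => x (q + t)) = none := by
          rw [hev1, htp]
          simp only [step]
          rw [if_neg hne]
        exact hx q (n+1) hnone
      rw [hc]
      simp [hcj]
lemma mpos (x : ℤ → DSym m) : 0 < m := by
  cases x 0 with
  | a j => exact j.pos
  | b j => exact j.pos

lemma diff_const_right (ω1 ω2 : ℤ → OSym m) (M : ℤ) (h : ∀ t, M ≤ t → ω1 t = ω2 t) :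
    ∀ t, M ≤ t → HfunO ω1 t - HfunO ω2 t = HfunO ω1 M - HfunO ω2 M := by
  have key : ∀ n : ℕ, HfunO ω1 (M + n) - HfunO ω2 (M + n)
      = HfunO ω1 M - HfunO ω2 M := by
    intro n
    induction n with
    | zero => simp
    | succ k ih =>
      have h1 := HfunO_succ ω1 (M + k)
      have h2 := HfunO_succ ω2 (M + k)
      have he : ω1 (M + (k : ℤ)) = ω2 (M + (k : ℤ)) := h _ (by omega)
      rw [show M + ((k + 1 : ℕ) : ℤ) = M + (k : ℤ) + 1 by push_cast; ring, h1, h2, he]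
      omega
  intro t ht
  have := key (t - M).toNat
  rwa [show M + (((t - M).toNat : ℕ) : ℤ) = t by omega] at this

lemma diff_const_left (ω1 ω2 : ℤ → OSym m) (M : ℤ) (h : ∀ t, t < M → ω1 t = ω2 t) :
    ∀ t, t ≤ M → HfunO ω1 t - HfunO ω2 t = HfunO ω1 M - HfunO ω2 M := by
  have key : ∀ n : ℕ, HfunO ω1 (M - n) - HfunO ω2 (M - n)
      = HfunO ω1 M - HfunO ω2 M := by
    intro n
    induction n with
    | zero => simp
    | succ k ih =>
      have h1 := HfunO_succ ω1 (M - ((k : ℤ) + 1))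
      have h2 := HfunO_succ ω2 (M - ((k : ℤ) + 1))
      have he : ω1 (M - ((k : ℤ) + 1)) = ω2 (M - ((k : ℤ) + 1)) := h _ (by omega)
      rw [show M - ((k : ℤ) + 1) + 1 = M - (k : ℤ) by ring] at h1 h2
      rw [he] at h1
      rw [show M - ((k + 1 : ℕ) : ℤ) = M - ((k : ℤ) + 1) by push_cast; ring]
      rw [show M - ((k : ℕ) : ℤ) = M - (k : ℤ) from rfl] at ih
      omega
  intro t ht
  have := key (M - t).toNat
  rwa [show M - (((M - t).toNat : ℕ) : ℤ) = t by omega] at this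

/-- If `m = 0` the height function of any `ω` is nonpositive on the right. -/
lemma m_pos_of_omega {ω : ℤ → OSym m} (hω : ω ∈ OmegaPlusMinus m) : 0 < m := by
  rcases Nat.eq_zero_or_pos m with hm | hm
  · exfalso
    subst hm
    have hall : ∀ i, ω i = none := by
      intro i
      cases h : ω i with
      | none => rfl
      | some j => exact j.elim0
    have hneg : ∀ n : ℕ, HfunO ω n ≤ 0 := by
      intro n
      induction n with
      | zero => rw [show ((0:ℕ):ℤ) = 0 from rfl, HfunO_zero]
      | succ k ih =>
        have := HfunO_succ ω k
        rw [hall k] at this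
        simp only [sgnO] at this
        rw [show ((k + 1 : ℕ) : ℤ) = (k : ℤ) + 1 by push_cast; ring]
        omega
    obtain ⟨i, h1, h0⟩ :=
      ((hω.1.eventually (Filter.eventually_ge_atTop 1)).and
        (Filter.eventually_ge_atTop (0:ℤ))).exists
    have := hneg i.toNat
    rw [show ((i.toNat : ℕ) : ℤ) = i by omega] at this
    omega
  · exact hm
open Filter in
theorem stmt15_main (m : ℕ) :
    Set.BijOn gPlus (BPlusMinus m) (OmegaPlusMinus m) ∧
      ∀ x ∈ BPlusMinus m, ∀ y ∈ BPlusMinus m,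
        ({i : ℤ | x i ≠ y i}.Finite ↔
          {i : ℤ | gPlus x i ≠ gPlus y i}.Finite) := by
  constructor
  · refine ⟨?_, ?_, ?_⟩
    · -- MapsTo
      intro x hx
      obtain ⟨hx1, hx2, hx3⟩ := hx
      refine ⟨?_, ?_⟩
      · rw [HfunO_gPlus]; exact hx2
      · intro c; rw [HfunO_gPlus]; exact hx3 c
    · -- InjOn
      intro x hx y hy he
      haveI : NeZero m := ⟨(mpos x).ne'⟩
      rw [← gInv_gPlus x hx.1 hx.2.2, ← gInv_gPlus y hy.1 hy.2.2, he]
    · -- SurjOn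
      intro ω hω
      haveI : NeZero m := ⟨(m_pos_of_omega hω).ne'⟩
      have hbo : ∀ c : ℤ, ∃ᶠ i in atBot, HfunO ω i ≤ c := hω.2
      have hfe : Hfun (gInv ω) = HfunO ω := by rw [← HfunO_gPlus, gPlus_gInv]
      refine ⟨gInv ω, ⟨InX_gInv ω hbo, ?_, ?_⟩, gPlus_gInv ω⟩
      · rw [hfe]; exact hω.1
      · intro c; rw [hfe]; exact hω.2 c
  · intro x hx y hy
    constructor
    · -- easy direction
      intro hfin
      apply hfin.subset
      intro i hi
      simp only [Set.mem_setOf_eq] at hi ⊢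
      intro he
      exact hi (by unfold gPlus; rw [he])
    · -- hard direction
      intro hfin
      haveI : NeZero m := ⟨(mpos x).ne'⟩
      obtain ⟨hx1, hx2, hx3⟩ := hx
      obtain ⟨hy1, hy2, hy3⟩ := hy
      have hxg : gInv (gPlus x) = x := gInv_gPlus x hx1 hx3
      have hyg : gInv (gPlus y) = y := gInv_gPlus y hy1 hy3
      have hbo1 : ∀ c : ℤ, ∃ᶠ i in atBot, HfunO (gPlus x) i ≤ c := by
        intro c; rw [HfunO_gPlus]; exact hx3 c
      have hbo2 : ∀ c : ℤ, ∃ᶠ i in atBot, HfunO (gPlus y) i ≤ c := by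
        intro c; rw [HfunO_gPlus]; exact hy3 c
      obtain ⟨Ma, hMa⟩ := hfin.bddAbove
      obtain ⟨Mb, hMb⟩ := hfin.bddBelow
      set M := max Ma (-Mb) with hMdef
      have hM1 : Ma ≤ M := le_max_left _ _
      have hM2 : -Mb ≤ M := le_max_right _ _
      have hGin : ∀ t, gPlus x t ≠ gPlus y t → -M ≤ t ∧ t ≤ M := by
        intro t ht
        have h1 := hMa ht
        have h2 := hMb ht
        omega
      have hR : ∀ t, M + 1 ≤ t → gPlus x t = gPlus y t := by
        intro t ht; by_contra hne; have := hGin t hne; omega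
      have hL : ∀ t, t < -M → gPlus x t = gPlus y t := by
        intro t ht; by_contra hne; have := hGin t hne; omega
      have hdR := diff_const_right (gPlus x) (gPlus y) (M + 1) hR
      have hdL := diff_const_left (gPlus x) (gPlus y) (-M) hL
      have hx2' : Tendsto (HfunO (gPlus x)) atTop atTop := by
        rw [HfunO_gPlus]; exact hx2
      obtain ⟨P0, hP0⟩ := (eventually_atTop).mp
        (hx2'.eventually (eventually_gt_atTop (HfunO (gPlus x) (M + 1))))
      set P := max P0 (M + 1) with hPdef
      have hPa : P0 ≤ P := le_max_left _ _
      have hPb : M + 1 ≤ P := le_max_right _ _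
      apply Set.Finite.subset ((Set.finite_Icc (-M) P).union hfin)
      intro p hp
      by_contra hnp
      have hpG : gPlus x p = gPlus y p := by
        by_contra hne
        exact hnp (Set.mem_union_right _ hne)
      have hpI : p < -M ∨ P < p := by
        by_contra hI
        push_neg at hI
        exact hnp (Set.mem_union_left _ (Set.mem_Icc.mpr ⟨by omega, by omega⟩))
      cases hc1 : gPlus x p with
      | some j =>
        have hc2 : gPlus y p = some j := by rw [← hpG]; exact hc1
        have e1 := gInv_a (gPlus x) hc1
        have e2 := gInv_a (gPlus y) hc2
        rw [hxg] at e1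
        rw [hyg] at e2
        exact hp (by rw [e1, e2])
      | none =>
        have hc2 : gPlus y p = none := by rw [← hpG]; exact hc1
        obtain ⟨hlt1, hv1, hgt1, c, hcq⟩ := matchPos_spec (gPlus x) hbo1 p
        set q := matchPos (gPlus x) p with hqdef
        have key : matchPos (gPlus y) p = q ∧ gPlus y q = gPlus x q := by
          rcases hpI with hneg | hpos
          · have hq2 : matchPos (gPlus y) p = q := by
              apply matchPos_eq _ hbo2 _ _ (le_of_lt hlt1)
              · have e1 := hdL q (by omega)
                have e2 := hdL p (by omega)
                omega
              · intro t h1 h2 hEq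
                have e1 := hdL t (by omega)
                have e2 := hdL p (by omega)
                have := hgt1 t h1 h2
                omega
            exact ⟨hq2, (hL q (by omega)).symm⟩
          · have hqM : M + 1 ≤ q := by
              by_contra hqle
              push_neg at hqle
              have h1 := hgt1 (M + 1) (by omega) (by omega)
              have h2 := hP0 p (by omega)
              omega
            have hq2 : matchPos (gPlus y) p = q := by
              apply matchPos_eq _ hbo2 _ _ (le_of_lt hlt1)
              · have e1 := hdR q hqM
                have e2 := hdR p (by omega)
                omega
              · intro t h1 h2 hEq
                have e1 := hdR t (by omega)
                have e2 := hdR p (by omega)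
                have := hgt1 t h1 h2
                omega
            exact ⟨hq2, (hR q hqM).symm⟩
        have hxp : x p = .b ((gPlus x q).getD 0) := by
          have := gInv_b (gPlus x) hc1
          rw [hxg] at this
          exact this
        have hyp : y p = .b ((gPlus y (matchPos (gPlus y) p)).getD 0) := by
          have := gInv_b (gPlus y) hc2
          rw [hyg] at this
          exact this
        rw [key.1, key.2] at hyp
        exact hp (by rw [hxp, hyp])

end Dyck


/-- `g₊` restricts to a bijection from `B^{+∞}_{−∞}` onto
`Ω^{+∞}_{−∞}`, and two points of `B^{+∞}_{−∞}` are homoclinic (differ in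
finitely many coordinates) iff their images under `g₊` are homoclinic. -/
theorem stmt15 (m : ℕ) :
    Set.BijOn Dyck.gPlus (Dyck.BPlusMinus m) (Dyck.OmegaPlusMinus m) ∧
      ∀ x ∈ Dyck.BPlusMinus m, ∀ y ∈ Dyck.BPlusMinus m,
        ({i : ℤ | x i ≠ y i}.Finite ↔
          {i : ℤ | Dyck.gPlus x i ≠ Dyck.gPlus y i}.Finite) := by
  exact Dyck.stmt15_main m
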